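/- Let G be a finite group, H ≤ G a subgroup, x_1 = 1, x_2, …, x_s a complete set of representatives for the double cosets of H in G, and let V be an irreducible finite-dimensional complex representation of G whose character χ_V takes only rational values and which satisfies dim_ℂ V^H = 1. Then dim V · ∑_{i=1}^s |H ∩ x_i H x_i⁻¹| · χ_V(q_i)² = |G|, where q_i := (1/|H|) · ∑_{y ∈ Hx_iH} y. -/

import Mathlib

open scoped Classical

/-- The double coset `HxH` as a finset. -/
noncomputable def dosetFinset {G : Type*} [Group G] [Fintype G] (H : Subgroup G) (x : G) :
    Finset G :=
  {y : G | ∃ h ∈ H, ∃ h' ∈ H, y = h * x * h'}.toFinset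

/-- `|H ∩ xHx⁻¹|`. -/
noncomputable def interConjCard {G : Type*} [Group G] [Fintype G] (H : Subgroup G) (x : G) :
    ℕ :=
  Nat.card {g : G // g ∈ H ∧ ∃ h ∈ H, g = x * h * x⁻¹}

/-- The character of a finite-dimensional representation. -/
noncomputable def repChar {G V : Type*} [Group G] [AddCommGroup V] [Module ℂ V]
    (ρ : Representation ℂ G V) (g : G) : ℂ :=
  LinearMap.trace ℂ V (ρ g)

/-- Irreducibility: `V` is nonzero and has no proper nonzero `G`-invariant subspace. -/
def IsIrreducibleRep {G V : Type*} [Group G] [AddCommGroup V] [Module ℂ V]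
    (ρ : Representation ℂ G V) : Prop :=
  Nontrivial V ∧ ∀ W : Submodule ℂ V, (∀ g : G, ∀ v ∈ W, ρ g v ∈ W) → W = ⊥ ∨ W = ⊤

/-- The subspace `V^H` of `H`-fixed vectors. -/
def fixedSubmodule {G V : Type*} [Group G] [AddCommGroup V] [Module ℂ V]
    (ρ : Representation ℂ G V) (H : Subgroup G) : Submodule ℂ V where
  carrier := {v : V | ∀ h ∈ H, ρ h v = v}
  add_mem' := by
    intro a b ha hb h hh
    simp [map_add, ha h hh, hb h hh]
  zero_mem' := by
    intro h hh
    simp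
  smul_mem' := by
    intro c v hv h hh
    simp [map_smul, hv h hh]

/-!
Let `P = |H|⁻¹ ∑_{h ∈ H} ρ(h)`, the projection onto the line `V^H`; every compression `P A P` is
then `trace(P A P) • P`. By Schur's lemma and the orthogonality relation, `∑_g χ(g⁻¹) ρ(g)` is the
scalar `|G| / dim V`, and a rational character satisfies `χ(g⁻¹) = χ(g)`. Compress this identity
by `P` and split the sum over the double cosets: `P ρ(g) P` only depends on `H g H`, and counting
the representations `y = h x h'` shows `P ρ(x) P = |H ∩ xHx⁻¹| / |H|² • ∑_{y ∈ HxH} ρ(y)`. The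
double coset `H x_i H` thus contributes `|H ∩ x_i H x_i⁻¹| χ(q_i)² • P`, and comparing the
coefficients of `P` gives the identity.
-/

open Representation

theorem repChar_eq_character {G V : Type*} [Group G] [AddCommGroup V] [Module ℂ V]
    (ρ : Representation ℂ G V) : repChar ρ = ρ.character := rfl

theorem IsIrreducibleRep.isIrreducible {G V : Type*} [Group G] [AddCommGroup V] [Module ℂ V]
    {ρ : Representation ℂ G V} (hρ : IsIrreducibleRep ρ) : ρ.IsIrreducible where
  exists_pair_ne := by
    have := hρ.1
    exact ⟨⊥, ⊤, fun h => bot_ne_top (α := Submodule ℂ V) congr(Subrepresentation.toSubmodule $h)⟩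
  eq_bot_or_eq_top W := by
    rcases hρ.2 W.toSubmodule fun g v hv => W.apply_mem_toSubmodule g hv with h | h
    · exact Or.inl (Subrepresentation.toSubmodule_injective h)
    · exact Or.inr (Subrepresentation.toSubmodule_injective h)

namespace Representation.IsIrreducible

variable {k G V : Type*} [Field k] [Group G] [AddCommGroup V] [Module k V]

theorem nontrivial (ρ : Representation k G V) [ρ.IsIrreducible] : Nontrivial V :=
  IsSimpleModule.nontrivial (MonoidAlgebra k G) ρ.asModule

variable {ρ : Representation k G V} [ρ.IsIrreducible] [FiniteDimensional k V] [IsAlgClosed k]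
  [CharZero k]

theorem eq_trace_div_finrank_smul_one {A : Module.End k V} (hA : ∀ g, A * ρ g = ρ g * A) :
    A = (LinearMap.trace k V A / Module.finrank k V) • 1 := by
  obtain ⟨c, hc⟩ := algebraMap_intertwiningMap_bijective_of_isAlgClosed.2
    (⟨A, hA⟩ : IntertwiningMap ρ ρ)
  have hAc : A = c • 1 := congr(IntertwiningMap.toLinearMap $hc).symm
  have := nontrivial ρ
  have hd : (Module.finrank k V : k) ≠ 0 := Nat.cast_ne_zero.2 Module.finrank_pos.ne'
  rw [hAc, map_smul, LinearMap.trace_one, smul_eq_mul, mul_div_cancel_right₀ _ hd]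

theorem sum_character_inv_smul [Fintype G] :
    ∑ g : G, ρ.character g⁻¹ • ρ g = ((Nat.card G : k) / Module.finrank k V) • 1 := by
  have hG : (Nat.card G : k) ≠ 0 := Nat.cast_ne_zero.2 Nat.card_pos.ne'
  have : Invertible (Nat.card G : k) := invertibleOfNonzero hG
  have hcentral : ∀ h, (∑ g : G, ρ.character g⁻¹ • ρ g) * ρ h
      = ρ h * ∑ g : G, ρ.character g⁻¹ • ρ g := by
    intro h
    rw [Finset.sum_mul, Finset.mul_sum]
    refine Fintype.sum_equiv (MulAut.conj h⁻¹).toEquiv _ _ fun g => ?_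
    simp only [MulEquiv.toEquiv_eq_coe, MulEquiv.coe_toEquiv, MulAut.conj_apply, inv_inv,
      smul_mul_assoc, mul_smul_comm, ← map_mul]
    congr 1
    · rw [show (h⁻¹ * g * h)⁻¹ = h⁻¹ * g⁻¹ * h⁻¹⁻¹ by group, char_conj]
    · congr 1; group
  have htrace : LinearMap.trace k V (∑ g : G, ρ.character g⁻¹ • ρ g) = Nat.card G := by
    have := char_orthonormal ρ ρ
    simp only [show Nonempty (Representation.Equiv ρ ρ) from ⟨.refl ρ⟩, if_true] at this
    rw [map_sum, eq_comm, ← inv_mul_eq_one₀ hG, ← this]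
    simp only [map_smul, smul_eq_mul]
    exact congrArg _ (Finset.sum_congr rfl fun g _ => mul_comm (ρ.character g⁻¹) _)
  rw [eq_trace_div_finrank_smul_one hcentral, htrace]

end Representation.IsIrreducible

/-- The squares of the rational values of `χ` sum to something positive, so `ρ` receives a nonzero
intertwiner from its dual; by irreducibility and equality of dimensions it is an isomorphism. -/
theorem Representation.IsIrreducible.character_inv_of_rat {G V : Type*} [Group G] [Fintype G]
    [AddCommGroup V] [Module ℂ V] [FiniteDimensional ℂ V] {ρ : Representation ℂ G V}
    [ρ.IsIrreducible] (hrat : ∀ g, ∃ q : ℚ, ρ.character g = q) (g : G) :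
    ρ.character g⁻¹ = ρ.character g := by
  have := nontrivial ρ
  have : Invertible (Nat.card G : ℂ) := invertibleOfNonzero (Nat.cast_ne_zero.2 Nat.card_pos.ne')
  choose q hq using hrat
  have hsq : (Nat.card G : ℂ)⁻¹ * ∑ g : G, ((q g ^ 2 : ℚ) : ℂ)
      = Module.finrank ℂ (IntertwiningMap ρ.dual ρ) := by
    rw [← card_inv_mul_sum_char_mul_char_eq_finrank]
    simp [char_dual, hq, sq]
  have hq1 : q 1 = Module.finrank ℂ V := by exact_mod_cast (hq 1).symm.trans (char_one ρ)
  have hpos : 0 < ∑ g : G, q g ^ 2 :=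
    (pow_pos (hq1 ▸ Nat.cast_pos.2 Module.finrank_pos) 2).trans_le
      (Finset.single_le_sum (fun g _ => sq_nonneg (q g)) (Finset.mem_univ 1))
  obtain ⟨f, hf⟩ : ∃ f : IntertwiningMap ρ.dual ρ, f ≠ 0 := by
    by_contra! h
    have : Subsingleton (IntertwiningMap ρ.dual ρ) := ⟨fun a b => (h a).trans (h b).symm⟩
    rw [Module.finrank_zero_of_subsingleton, Nat.cast_zero, ← Rat.cast_sum,
      mul_eq_zero_iff_left (inv_ne_zero (Nat.cast_ne_zero.2 Nat.card_pos.ne')),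
      Rat.cast_eq_zero] at hsq
    exact hpos.ne' hsq
  have hsurj := (surjective_or_eq_zero f).resolve_right hf
  have hinj := (LinearMap.injective_iff_surjective_of_finrank_eq_finrank
    Subspace.dual_finrank_eq).2 hsurj
  rw [← char_dual, char_iso (f.ofBijective ⟨hinj, hsurj⟩)]

theorem LinearMap.IsProj.mul_mul_eq_trace_smul {k V : Type*} [Field k] [AddCommGroup V]
    [Module k V] [FiniteDimensional k V] {S : Submodule k V} {P : Module.End k V}
    (hP : LinearMap.IsProj S P) (hS : Module.finrank k S = 1) (A : Module.End k V) :
    P * A * P = LinearMap.trace k V (P * A * P) • P := by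
  obtain ⟨c, hc⟩ := (LinearMap.existsUnique_eq_smul_id_of_finrank_eq_one hS
    ((P * A).restrict fun v _ => hP.map_mem (A v))).exists
  have hPAP : P * A * P = c • P := by
    ext v
    simpa using congr(($hc ⟨P v, hP.map_mem v⟩ : V))
  rw [hPAP, map_smul, hP.trace, hS, Nat.cast_one, smul_eq_mul, mul_one]

section DoubleCoset

variable {G : Type*} [Group G] [Fintype G] (H : Subgroup G) (x : G)

theorem mem_dosetFinset {y : G} : y ∈ dosetFinset H x ↔ ∃ h ∈ H, ∃ h' ∈ H, y = h * x * h' := by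
  simp [dosetFinset]

theorem image_mul_mul_eq_dosetFinset :
    Finset.univ.image (fun p : H × H => (p.1 : G) * x * p.2) = dosetFinset H x := by
  ext y
  simp [mem_dosetFinset, eq_comm]

theorem card_filter_mul_mul_eq_interConjCard {y : G} (hy : y ∈ dosetFinset H x) :
    (Finset.univ.filter fun p : H × H => (p.1 : G) * x * p.2 = y).card = interConjCard H x := by
  obtain ⟨a, ha, b, hb, rfl⟩ := (mem_dosetFinset H x).1 hy
  rw [← Fintype.card_subtype, ← Nat.card_eq_fintype_card, interConjCard]
  refine Nat.card_congr
    { toFun := fun p => ⟨a⁻¹ * p.1.1, mul_mem (inv_mem ha) p.1.1.2, b * (p.1.2 : G)⁻¹,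
        mul_mem hb (inv_mem p.1.2.2), ?_⟩
      invFun := fun k => ⟨(⟨a * k, mul_mem ha k.2.1⟩, ⟨x⁻¹ * (k : G)⁻¹ * x * b, ?_⟩), ?_⟩
      left_inv := fun p => ?_
      right_inv := fun k => ?_ }
  · obtain ⟨⟨⟨h, -⟩, ⟨h', -⟩⟩, hp : h * x * h' = a * x * b⟩ := p
    have : h = a * x * b * h'⁻¹ * x⁻¹ := by rw [← hp]; group
    simp only [this]; group
  · obtain ⟨k, -, m, hm, rfl⟩ := k
    convert mul_mem (inv_mem hm) hb using 1; group
  · simp only; group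
  · obtain ⟨⟨⟨h, -⟩, ⟨h', -⟩⟩, hp : h * x * h' = a * x * b⟩ := p
    have : h' = x⁻¹ * h⁻¹ * (a * x * b) := by rw [← hp]; group
    refine Subtype.ext (Prod.ext (Subtype.ext ?_) (Subtype.ext ?_))
    · simp only; group
    · simp only [this]; group
  · exact Subtype.ext (by simp only; group)

theorem sum_mul_mul_eq_interConjCard_smul {M : Type*} [AddCommMonoid M] (f : G → M) :
    ∑ p : H × H, f (p.1 * x * p.2) = interConjCard H x • ∑ y ∈ dosetFinset H x, f y := by
  rw [Finset.sum_comp f (fun p : H × H => (p.1 : G) * x * p.2), image_mul_mul_eq_dosetFinset,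
    Finset.smul_sum]
  exact Finset.sum_congr rfl fun y hy => by rw [card_filter_mul_mul_eq_interConjCard H x hy]

end DoubleCoset

theorem sum_eq_sum_sum_dosetFinset {G ι M : Type*} [Group G] [Fintype G] [Fintype ι]
    [AddCommMonoid M] {H : Subgroup G} {x : ι → G}
    (hreps : ∀ g : G, ∃! i, ∃ h ∈ H, ∃ h' ∈ H, g = h * x i * h') (f : G → M) :
    ∑ g, f g = ∑ i, ∑ g ∈ dosetFinset H (x i), f g := by
  choose idx hidx using hreps
  have hfiber : ∀ i, dosetFinset H (x i) = Finset.univ.filter (idx · = i) := by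
    intro i
    ext g
    simp only [mem_dosetFinset, Finset.mem_filter, Finset.mem_univ, true_and]
    exact ⟨fun hg => ((hidx g).2 i hg).symm, fun h => h ▸ (hidx g).1⟩
  simp_rw [hfiber]
  exact (Finset.sum_fiberwise _ idx f).symm

section SubgroupAverage

variable {G V : Type*} [Group G] [Fintype G] [AddCommGroup V] [Module ℂ V]
  (ρ : Representation ℂ G V) (H : Subgroup G)

noncomputable def subgroupAverage : Module.End ℂ V :=
  (Nat.card H : ℂ)⁻¹ • ∑ h : H, ρ h

variable {ρ H}

theorem mul_subgroupAverage {h : G} (hh : h ∈ H) :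
    ρ h * subgroupAverage ρ H = subgroupAverage ρ H := by
  rw [subgroupAverage, mul_smul_comm, Finset.mul_sum]
  congr 1
  exact Fintype.sum_equiv (Equiv.mulLeft (⟨h, hh⟩ : H)) _ _ fun k => (map_mul ρ h k).symm

theorem subgroupAverage_mul {h : G} (hh : h ∈ H) :
    subgroupAverage ρ H * ρ h = subgroupAverage ρ H := by
  rw [subgroupAverage, smul_mul_assoc, Finset.sum_mul]
  congr 1
  exact Fintype.sum_equiv (Equiv.mulRight (⟨h, hh⟩ : H)) _ _ fun k => (map_mul ρ (k : G) h).symm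

theorem isProj_subgroupAverage : LinearMap.IsProj (fixedSubmodule ρ H) (subgroupAverage ρ H) where
  map_mem v h hh := congr($(mul_subgroupAverage hh) v)
  map_id v hv := by
    have hH : (Nat.card H : ℂ) ≠ 0 := Nat.cast_ne_zero.2 Nat.card_pos.ne'
    simp only [subgroupAverage, LinearMap.smul_apply, LinearMap.coe_sum, Finset.sum_apply]
    rw [Finset.sum_congr rfl fun (h : H) _ => hv h h.2, Finset.sum_const, Finset.card_univ,
      ← Nat.card_eq_fintype_card, ← Nat.cast_smul_eq_nsmul ℂ, smul_smul, inv_mul_cancel₀ hH,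
      one_smul]

theorem subgroupAverage_mul_mul_of_mem_dosetFinset {x g : G} (hg : g ∈ dosetFinset H x) :
    subgroupAverage ρ H * ρ g * subgroupAverage ρ H
      = subgroupAverage ρ H * ρ x * subgroupAverage ρ H := by
  obtain ⟨h, hh, h', hh', rfl⟩ := (mem_dosetFinset H x).1 hg
  simp only [map_mul, ← mul_assoc, subgroupAverage_mul hh]
  rw [mul_assoc (_ * ρ x), mul_subgroupAverage hh']

theorem subgroupAverage_mul_mul (x : G) :
    subgroupAverage ρ H * ρ x * subgroupAverage ρ H
      = ((interConjCard H x : ℂ) / (Nat.card H : ℂ) ^ 2) • ∑ y ∈ dosetFinset H x, ρ y := by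
  rw [subgroupAverage, smul_mul_assoc, smul_mul_assoc, mul_smul_comm, smul_smul,
    Finset.sum_mul, Finset.sum_mul_sum, ← Fintype.sum_prod_type']
  simp only [← map_mul]
  rw [sum_mul_mul_eq_interConjCard_smul H x ρ, ← Nat.cast_smul_eq_nsmul ℂ, smul_smul]
  congr 1
  ring

theorem sum_dosetFinset_character_smul_subgroupAverage_mul_mul [FiniteDimensional ℂ V]
    (hfix : Module.finrank ℂ (fixedSubmodule ρ H) = 1) (x : G) :
    ∑ g ∈ dosetFinset H x, ρ.character g • (subgroupAverage ρ H * ρ g * subgroupAverage ρ H)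
      = ((interConjCard H x : ℂ) *
          ((Nat.card H : ℂ)⁻¹ * ∑ y ∈ dosetFinset H x, ρ.character y) ^ 2) •
        subgroupAverage ρ H := by
  have htrace : LinearMap.trace ℂ V (subgroupAverage ρ H * ρ x * subgroupAverage ρ H)
      = (interConjCard H x : ℂ) / (Nat.card H : ℂ) ^ 2 * ∑ y ∈ dosetFinset H x, ρ.character y := by
    rw [subgroupAverage_mul_mul, map_smul, map_sum, smul_eq_mul]
    rfl
  rw [Finset.sum_congr rfl fun g hg => by rw [subgroupAverage_mul_mul_of_mem_dosetFinset hg],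
    ← Finset.sum_smul, isProj_subgroupAverage.mul_mul_eq_trace_smul hfix, htrace, smul_smul]
  congr 1
  ring

end SubgroupAverage

theorem hecke_orthogonality_rat_char_general {G V : Type*} [Group G] [Fintype G]
    [AddCommGroup V] [Module ℂ V] [FiniteDimensional ℂ V]
    (ρ : Representation ℂ G V) (hirr : IsIrreducibleRep ρ)
    (hrat : ∀ g : G, ∃ q : ℚ, repChar ρ g = (q : ℂ))
    (H : Subgroup G) (hfix : Module.finrank ℂ (fixedSubmodule ρ H) = 1)
    (s : ℕ) (x : Fin s → G)
    (hreps : ∀ g : G, ∃! i : Fin s, ∃ h ∈ H, ∃ h' ∈ H, g = h * x i * h') :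
    (Module.finrank ℂ V : ℂ) *
        ∑ i : Fin s,
          (interConjCard H (x i) : ℂ) *
            ((Nat.card H : ℂ)⁻¹ * ∑ y ∈ dosetFinset H (x i), repChar ρ y) ^ 2
      = (Fintype.card G : ℂ) := by
  have := hirr.isIrreducible
  have := hirr.1
  have hP : subgroupAverage ρ H ≠ 0 := by
    intro h
    have htrace := (isProj_subgroupAverage (ρ := ρ) (H := H)).trace
    rw [hfix, h, map_zero, Nat.cast_one] at htrace
    exact zero_ne_one htrace
  have hPTP := congr(subgroupAverage ρ H * $(IsIrreducible.sum_character_inv_smul (ρ := ρ)) *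
    subgroupAverage ρ H)
  rw [mul_smul_comm, mul_one, smul_mul_assoc, isProj_subgroupAverage.isIdempotentElem.eq,
    Finset.mul_sum, Finset.sum_mul, sum_eq_sum_sum_dosetFinset hreps] at hPTP
  simp only [IsIrreducible.character_inv_of_rat hrat, mul_smul_comm, smul_mul_assoc,
    sum_dosetFinset_character_smul_subgroupAverage_mul_mul hfix, ← Finset.sum_smul] at hPTP
  rw [repChar_eq_character, smul_left_injective ℂ hP hPTP, Nat.card_eq_fintype_card]
  exact mul_div_cancel₀ _ (Nat.cast_ne_zero.2 Module.finrank_pos.ne')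

/-- If `V` is irreducible with rational-valued character and `dim V^H = 1`, then
`dim V · ∑_i |H ∩ x_i H x_i⁻¹| · χ_V(q_i)² = |G|`, where
`χ_V(q_i) = (1/|H|) ∑_{y ∈ H x_i H} χ_V(y)`. -/
theorem hecke_orthogonality_rat_char {G V : Type*} [Group G] [Fintype G]
    [AddCommGroup V] [Module ℂ V] [FiniteDimensional ℂ V]
    (ρ : Representation ℂ G V) (hirr : IsIrreducibleRep ρ)
    (hrat : ∀ g : G, ∃ q : ℚ, repChar ρ g = (q : ℂ))
    (H : Subgroup G) (hfix : Module.finrank ℂ (fixedSubmodule ρ H) = 1)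
    (s : ℕ) (hs : 0 < s) (x : Fin s → G) (hx1 : x ⟨0, hs⟩ = 1)
    (hreps : ∀ g : G, ∃! i : Fin s, ∃ h ∈ H, ∃ h' ∈ H, g = h * x i * h') :
    (Module.finrank ℂ V : ℂ) *
        ∑ i : Fin s,
          (interConjCard H (x i) : ℂ) *
            ((Nat.card H : ℂ)⁻¹ * ∑ y ∈ dosetFinset H (x i), repChar ρ y) ^ 2
      = (Fintype.card G : ℂ) :=
  hecke_orthogonality_rat_char_general ρ hirr hrat H hfix s x hreps
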